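/- arXiv:2404.07011 — 3 statements merged into one kernel-verified Lean document; each statement's English description precedes it below -/
import Mathlib

section
/- Let M be the maximum load when m' balls are thrown uniformly at random into n bins, and suppose P(M ≥ j) ≤ C(m', j)·(1/n)^{j-1} for all j. If m' ≤ 2(n log n)^{3/5} and n is sufficiently large, then E[M] ≤ 4 + o(1); in particular E[M] ≤ 5 for all sufficiently large n. -/
/-!
For a nonnegative integer random variable, `E[M] = ∑_{j ≥ 0} P(M > j)`. The first four terms
are at most `1`. For the rest, `C(m', j) n^{1-j} ≤ (m'^5 / n^4) (m' / n)^{j-5}`, and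
`m' ≤ 2 (n log n)^{3/5}` gives `m'^5 ≤ 32 n^3 log^3 n ≤ n^4 / 2` once `64 log^3 n ≤ n`, hence
also `m' ≤ n / 2`; so the tail is dominated by `∑_{i ≥ 1} 2^{-i} = 1`.
-/

open MeasureTheory Filter ENNReal

section TailSum

variable {Ω : Type*} [MeasurableSpace Ω] {μ : Measure Ω} {M : Ω → ℕ}

lemma natCast_eq_tsum_ite_lt (k : ℕ) : (k : ℝ≥0∞) = ∑' j : ℕ, if j < k then 1 else 0 := by
  rw [tsum_eq_sum (s := Finset.range k) (by simp +contextual),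
    Finset.sum_congr rfl fun j hj => if_pos (Finset.mem_range.1 hj)]
  simp

theorem lintegral_natCast_eq_tsum_measure_lt (hM : Measurable M) :
    ∫⁻ ω, (M ω : ℝ≥0∞) ∂μ = ∑' j, μ {ω | j < M ω} := by
  have hmeas (j : ℕ) : MeasurableSet {ω | j < M ω} := hM measurableSet_Ioi
  calc ∫⁻ ω, (M ω : ℝ≥0∞) ∂μ
      = ∫⁻ ω, ∑' j : ℕ, {ω | j < M ω}.indicator 1 ω ∂μ := by
        simp_rw [natCast_eq_tsum_ite_lt (M _), Set.indicator_apply]; rfl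
    _ = ∑' j, μ {ω | j < M ω} := by
        rw [lintegral_tsum fun j => (measurable_one.indicator (hmeas j)).aemeasurable]
        simp [lintegral_indicator_one (hmeas _)]

theorem lintegral_natCast_le_add_tsum_measure_lt [IsProbabilityMeasure μ] (hM : Measurable M)
    (k : ℕ) : ∫⁻ ω, (M ω : ℝ≥0∞) ∂μ ≤ k + ∑' j, μ {ω | j + k < M ω} := by
  rw [lintegral_natCast_eq_tsum_measure_lt hM, ← ENNReal.summable.sum_add_tsum_nat_add' (k := k)]
  gcongr
  calc ∑ j ∈ Finset.range k, μ {ω | j < M ω} ≤ ∑ _j ∈ Finset.range k, 1 :=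
        Finset.sum_le_sum fun _ _ => prob_le_one
    _ = k := by simp

theorem integral_natCast_eq_toReal_lintegral (hM : Measurable M) :
    ∫ ω, (M ω : ℝ) ∂μ = (∫⁻ ω, (M ω : ℝ≥0∞) ∂μ).toReal := by
  simpa using integral_toReal (μ := μ) (f := fun ω => (M ω : ℝ≥0∞))
    (measurable_from_top.comp hM).aemeasurable (ae_of_all _ fun _ => natCast_lt_top _)

end TailSum

lemma choose_mul_inv_pow_le (m n k j : ℕ) :
    (m.choose (j + k + 1) : ℝ) * (n : ℝ)⁻¹ ^ (j + k)
      ≤ m ^ (k + 1) * (n : ℝ)⁻¹ ^ k * (m * (n : ℝ)⁻¹) ^ j :=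
  calc (m.choose (j + k + 1) : ℝ) * (n : ℝ)⁻¹ ^ (j + k)
      ≤ (m : ℝ) ^ (j + k + 1) * (n : ℝ)⁻¹ ^ (j + k) := by
        gcongr; exact_mod_cast m.choose_le_pow _
    _ = m ^ (k + 1) * (n : ℝ)⁻¹ ^ k * (m * (n : ℝ)⁻¹) ^ j := by ring

lemma tsum_ofReal_choose_mul_inv_pow_le_one {m n k : ℕ} (h₁ : 2 * m ≤ n)
    (h₂ : 2 * m ^ (k + 1) ≤ n ^ k) :
    ∑' j : ℕ, ENNReal.ofReal (m.choose (j + k + 1) * (n : ℝ)⁻¹ ^ (j + k)) ≤ 1 := by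
  obtain rfl | hn := n.eq_zero_or_pos
  · obtain rfl : m = 0 := by omega
    simp
  have hn' : (0 : ℝ) < n := by exact_mod_cast hn
  have hratio : (m : ℝ) * (n : ℝ)⁻¹ ≤ 2⁻¹ := by
    have : (2 : ℝ) * m ≤ n := by exact_mod_cast h₁
    rw [← div_eq_mul_inv, div_le_iff₀ hn']; linarith
  have hhead : (m : ℝ) ^ (k + 1) * (n : ℝ)⁻¹ ^ k ≤ 2⁻¹ := by
    have : (2 : ℝ) * m ^ (k + 1) ≤ n ^ k := by exact_mod_cast h₂
    rw [inv_pow, ← div_eq_mul_inv, div_le_iff₀ (by positivity)]; linarith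
  have hterm (j : ℕ) : ENNReal.ofReal (m.choose (j + k + 1) * (n : ℝ)⁻¹ ^ (j + k))
      ≤ 2⁻¹ ^ (j + 1) := by
    have hreal : (m.choose (j + k + 1) : ℝ) * (n : ℝ)⁻¹ ^ (j + k) ≤ 2⁻¹ ^ (j + 1) :=
      calc _ ≤ m ^ (k + 1) * (n : ℝ)⁻¹ ^ k * (m * (n : ℝ)⁻¹) ^ j :=
            choose_mul_inv_pow_le m n k j
        _ ≤ 2⁻¹ * 2⁻¹ ^ j := by gcongr
        _ = 2⁻¹ ^ (j + 1) := (pow_succ' _ _).symm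
    refine (ENNReal.ofReal_le_ofReal hreal).trans_eq ?_
    rw [ENNReal.ofReal_pow (by norm_num), ENNReal.ofReal_inv_of_pos two_pos, ENNReal.ofReal_ofNat]
  calc _ ≤ ∑' j : ℕ, (2⁻¹ : ℝ≥0∞) ^ (j + 1) := ENNReal.tsum_le_tsum hterm
    _ = 1 := by
      rw [ENNReal.tsum_geometric_add_one, ENNReal.one_sub_inv_two, inv_inv,
        ENNReal.inv_mul_cancel] <;> simp

lemma two_mul_le_of_two_mul_pow_succ_le {m n k : ℕ} (hn : 2 ^ k ≤ n)
    (h : 2 * m ^ (k + 1) ≤ n ^ k) : 2 * m ≤ n := by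
  refine (Nat.pow_le_pow_iff_left k.succ_ne_zero).1 ?_
  calc (2 * m) ^ (k + 1) = 2 ^ k * (2 * m ^ (k + 1)) := by ring
    _ ≤ n * n ^ k := by gcongr
    _ = n ^ (k + 1) := by ring

lemma eventually_const_mul_log_pow_le {c : ℝ} (hc : 0 < c) (k : ℕ) :
    ∀ᶠ x : ℝ in atTop, c * Real.log x ^ k ≤ x := by
  filter_upwards [(Real.isLittleO_pow_log_id_atTop (n := k)).def (inv_pos.2 hc),
    eventually_ge_atTop 1] with x hx hx1
  rw [Real.norm_of_nonneg (pow_nonneg (Real.log_nonneg hx1) k), id,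
    Real.norm_of_nonneg (by linarith), inv_mul_eq_div, le_div_iff₀' hc] at hx
  exact hx

lemma two_mul_pow_five_le_pow_four {m n : ℕ} (hlog : 64 * Real.log n ^ 3 ≤ n)
    (hm : (m : ℝ) ≤ 2 * ((n : ℝ) * Real.log n) ^ ((3 : ℝ) / 5)) : 2 * m ^ 5 ≤ n ^ 4 := by
  have hL : 0 ≤ (n : ℝ) * Real.log n := mul_nonneg n.cast_nonneg (Real.log_natCast_nonneg n)
  have hm5 : (m : ℝ) ^ 5 ≤ 32 * ((n : ℝ) * Real.log n) ^ 3 :=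
    calc (m : ℝ) ^ 5 ≤ (2 * ((n : ℝ) * Real.log n) ^ ((3 : ℝ) / 5)) ^ 5 := by gcongr
      _ = 32 * ((n : ℝ) * Real.log n) ^ 3 := by
        rw [mul_pow, ← Real.rpow_natCast (_ ^ _) 5, ← Real.rpow_mul hL]; norm_num
  have hn3 := mul_le_mul_of_nonneg_left hlog (pow_nonneg n.cast_nonneg 3)
  exact_mod_cast (by linarith : (2 : ℝ) * m ^ 5 ≤ n ^ 4)

/-- If `M` is the maximum load of `m'` balls in `n` bins, satisfying the union-bound tail
`P(M ≥ j) ≤ C(m',j)·(1/n)^{j-1}`, and `m' ≤ 2(n log n)^{3/5}`, then for all sufficiently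
large `n` we have `E[M] ≤ 5` (i.e. `E[M] ≤ 4 + o(1)`). -/
theorem expected_max_load_le_five : ∃ n₀ : ℕ, ∀ n : ℕ, n₀ ≤ n → ∀ m' : ℕ,
    (m' : ℝ) ≤ 2 * ((n : ℝ) * Real.log n) ^ ((3 : ℝ) / 5) →
    ∀ (Ω : Type) (_ : MeasurableSpace Ω) (μ : Measure Ω) (_ : IsProbabilityMeasure μ)
      (M : Ω → ℕ), Measurable M → Integrable (fun ω => (M ω : ℝ)) μ →
    (∀ j : ℕ, 1 ≤ j →
      μ {ω | j ≤ M ω} ≤ ENNReal.ofReal ((m'.choose j : ℝ) * (1 / (n : ℝ)) ^ (j - 1))) →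
    ∫ ω, (M ω : ℝ) ∂μ ≤ 5 := by
  obtain ⟨n₀, hn₀⟩ := eventually_atTop.1 <| (tendsto_natCast_atTop_atTop.eventually
    (eventually_const_mul_log_pow_le (by norm_num : (0 : ℝ) < 64) 3)).and (eventually_ge_atTop 16)
  refine ⟨n₀, fun n hn m' hm Ω _ μ _ M hM _ hTail => ?_⟩
  obtain ⟨hlog, h16⟩ := hn₀ n hn
  have h₅ := two_mul_pow_five_le_pow_four hlog hm
  have h₁ := two_mul_le_of_two_mul_pow_succ_le (k := 4) h16 h₅
  have hlint : ∫⁻ ω, (M ω : ℝ≥0∞) ∂μ ≤ 4 + 1 :=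
    calc ∫⁻ ω, (M ω : ℝ≥0∞) ∂μ ≤ 4 + ∑' j, μ {ω | j + 4 < M ω} :=
          lintegral_natCast_le_add_tsum_measure_lt hM 4
      _ ≤ 4 + 1 := by
          gcongr
          refine (ENNReal.tsum_le_tsum fun j => ?_).trans
            (tsum_ofReal_choose_mul_inv_pow_le_one h₁ h₅)
          simpa using hTail (j + 4 + 1) (by omega)
  rw [integral_natCast_eq_toReal_lintegral hM]
  exact ENNReal.toReal_le_of_le_ofReal (by norm_num) (hlint.trans_eq (by norm_num))
end

section
/- For the natural-log Stirling bounds: for every natural number n ≥ 1, (n/e)^n · √(2πn) · e^{1/(12n+1)} ≤ n! ≤ (n/e)^n · √(2πn) · e^{1/(12n)}. -/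
/-!
Let `s n = n! / (√(2n) (n/e)^n)`, Mathlib's `Stirling.stirlingSeq`, which tends to `√π`.
The difference `log s n - log s (n+1)` is the series `∑_{k ≥ 1} x^(2k) / (2k+1)` with
`x = 1 / (2n+1)`. Bounding `1/(2k+1)` above by `1/3` and below by `3^(-k)` and summing the
geometric series squeezes this difference between `1/(12n+1) - 1/(12(n+1)+1)` and
`1/(12n) - 1/(12(n+1))`. Hence `log s n - 1/(12n+1)` decreases and `log s n - 1/(12n)`
increases, both to `log √π`.
-/
open Filter Topology Real

theorem sub_le_of_tendsto_of_sub_succ_le {f c : ℕ → ℝ} {L : ℝ}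
    (hf : Tendsto f atTop (𝓝 L)) (hc : Tendsto c atTop (𝓝 0))
    (h : ∀ n, f n - f (n + 1) ≤ c n - c (n + 1)) (n : ℕ) : f n ≤ L + c n := by
  have hmono : Monotone fun k ↦ f k - c k := monotone_nat_of_le_succ fun k ↦ by linarith [h k]
  linarith [hmono.ge_of_tendsto (by simpa using hf.sub hc) n]

theorem add_le_of_tendsto_of_le_sub_succ {f c : ℕ → ℝ} {L : ℝ}
    (hf : Tendsto f atTop (𝓝 L)) (hc : Tendsto c atTop (𝓝 0))
    (h : ∀ n, c n - c (n + 1) ≤ f n - f (n + 1)) (n : ℕ) : L + c n ≤ f n := by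
  have hanti : Antitone fun k ↦ f k - c k := antitone_nat_of_succ_le fun k ↦ by linarith [h k]
  linarith [hanti.le_of_tendsto (by simpa using hf.sub hc) n]

namespace Stirling

theorem le_log_stirlingSeq_sdiff (n : ℕ) :
    1 / (12 * (n + 1 : ℝ) + 1) - 1 / (12 * (n + 2 : ℝ) + 1) ≤
      log (stirlingSeq (n + 1)) - log (stirlingSeq (n + 2)) := by
  set r := ((1 : ℝ) / (2 * ↑(n + 1) + 1)) ^ 2 with hr
  have hr1 : r / 3 < 1 := by grw [hr, ← n.zero_le]; norm_num
  have hgeom : HasSum (fun k : ℕ ↦ (r / 3) ^ (k + 1)) (r / 3 * (1 - r / 3)⁻¹) := by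
    simpa only [← pow_succ'] using
      (hasSum_geometric_of_lt_one (by positivity) hr1).mul_left (r / 3)
  have hterm (k : ℕ) : (r / 3) ^ (k + 1) ≤ 1 / (2 * ↑(k + 1) + 1) * r ^ (k + 1) := by
    have h3 : (2 * ↑(k + 1) + 1 : ℝ) ≤ 3 ^ (k + 1) := by
      have := one_add_mul_le_pow (a := (2 : ℝ)) (by norm_num) (k + 1)
      norm_num at this ⊢; linarith
    rw [div_pow, div_eq_mul_one_div (r ^ _), mul_comm]
    gcongr
  calc 1 / (12 * (n + 1 : ℝ) + 1) - 1 / (12 * (n + 2 : ℝ) + 1) ≤ r / 3 * (1 - r / 3)⁻¹ := by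
        rw [hr]
        push_cast
        field_simp
        have hn : (0 : ℝ) ≤ n := n.cast_nonneg
        rw [le_div_iff₀ (by nlinarith)]
        nlinarith
    _ ≤ _ := hasSum_le hterm hgeom (log_stirlingSeq_sdiff_hasSum n)

theorem tendsto_log_stirlingSeq_succ :
    Tendsto (fun n : ℕ ↦ log (stirlingSeq (n + 1))) atTop (𝓝 (log √π)) :=
  ((tendsto_add_atTop_iff_nat 1).2 tendsto_stirlingSeq_sqrt_pi).log (by positivity)

theorem tendsto_one_div_twelve_mul_add (a : ℝ) :
    Tendsto (fun n : ℕ ↦ 1 / (12 * (n + 1 : ℝ) + a)) atTop (𝓝 0) :=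
  tendsto_const_nhds.div_atTop <| tendsto_atTop_add_const_right _ a <|
    (tendsto_atTop_add_const_right _ 1 tendsto_natCast_atTop_atTop).const_mul_atTop (by norm_num)

theorem log_stirlingSeq_succ_le (n : ℕ) :
    log (stirlingSeq (n + 1)) ≤ log √π + 1 / (12 * (n + 1 : ℝ)) := by
  refine sub_le_of_tendsto_of_sub_succ_le tendsto_log_stirlingSeq_succ
    (by simpa only [add_zero] using tendsto_one_div_twelve_mul_add 0) (fun k ↦ ?_) n
  exact (log_stirlingSeq_sdiff_le (k + 1)).trans_eq (by push_cast; field_simp; ring)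

theorem le_log_stirlingSeq_succ (n : ℕ) :
    log √π + 1 / (12 * (n + 1 : ℝ) + 1) ≤ log (stirlingSeq (n + 1)) := by
  refine add_le_of_tendsto_of_le_sub_succ tendsto_log_stirlingSeq_succ
    (tendsto_one_div_twelve_mul_add 1) (fun k ↦ ?_) n
  convert le_log_stirlingSeq_sdiff k using 3
  push_cast
  ring

theorem sqrt_pi_mul_exp_le_stirlingSeq {n : ℕ} (hn : n ≠ 0) :
    √π * exp (1 / (12 * n + 1)) ≤ stirlingSeq n := by
  obtain ⟨m, rfl⟩ := Nat.exists_eq_succ_of_ne_zero hn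
  rw [← exp_log (stirlingSeq'_pos m), ← exp_log (by positivity : 0 < √π), ← exp_add]
  exact exp_le_exp.2 (by exact_mod_cast le_log_stirlingSeq_succ m)

theorem stirlingSeq_le_sqrt_pi_mul_exp {n : ℕ} (hn : n ≠ 0) :
    stirlingSeq n ≤ √π * exp (1 / (12 * n)) := by
  obtain ⟨m, rfl⟩ := Nat.exists_eq_succ_of_ne_zero hn
  rw [← exp_log (stirlingSeq'_pos m), ← exp_log (by positivity : 0 < √π), ← exp_add]
  exact exp_le_exp.2 (by exact_mod_cast log_stirlingSeq_succ_le m)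

end Stirling

open Stirling in
/-- Robbins' first-order Stirling bounds:
`(n/e)^n √(2πn) e^{1/(12n+1)} ≤ n! ≤ (n/e)^n √(2πn) e^{1/(12n)}`. -/
theorem robbins_stirling (n : ℕ) (hn : 1 ≤ n) :
    ((n : ℝ) / Real.exp 1) ^ n * Real.sqrt (2 * Real.pi * n)
        * Real.exp (1 / (12 * (n : ℝ) + 1)) ≤ (Nat.factorial n : ℝ) ∧
      (Nat.factorial n : ℝ) ≤ ((n : ℝ) / Real.exp 1) ^ n * Real.sqrt (2 * Real.pi * n)
        * Real.exp (1 / (12 * (n : ℝ))) := by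
  have hn0 : n ≠ 0 := by omega
  set D := √(2 * n) * (n / exp 1) ^ n
  have hD : 0 < D := by positivity
  have hfact : (n.factorial : ℝ) = stirlingSeq n * D := by
    rw [stirlingSeq, div_mul_cancel₀ _ hD.ne']
  have hsqrt (r : ℝ) : (n / exp 1) ^ n * √(2 * π * n) * exp r = √π * exp r * D := by
    rw [show (2 * π * n : ℝ) = π * (2 * n) by ring, sqrt_mul pi_pos.le]
    ring
  rw [hfact, hsqrt, hsqrt]
  exact ⟨mul_le_mul_of_nonneg_right (sqrt_pi_mul_exp_le_stirlingSeq hn0) hD.le,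
    mul_le_mul_of_nonneg_right (stirlingSeq_le_sqrt_pi_mul_exp hn0) hD.le⟩
end

section
/- If n balls are thrown independently and uniformly at random into n bins and K_n denotes the maximum bin load, then for every ε > 0, P(K_n ≥ (1+ε)·log n / log log n) → 0 as n → ∞. -/
open Finset Filter Real

namespace MaxLoadAux

lemma count_fixed (n k : ℕ) (i : Fin n) (S : Finset (Fin n)) (hS : S.card = k) :
    ((univ : Finset (Fin n → Fin n)).filter (fun f => ∀ b ∈ S, f b = i)).card ≤ n ^ (n - k) := by
  classical
  have h := Finset.card_le_card_of_injOn
    (s := (univ : Finset (Fin n → Fin n)).filter (fun f => ∀ b ∈ S, f b = i))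
    (f := fun (f : Fin n → Fin n) => (fun b : {x // x ∈ Sᶜ} => f b))
    (t := (univ : Finset ({x // x ∈ Sᶜ} → Fin n)))
    (fun f _ => mem_univ _)
    (by
      intro f hf g hg hfg
      simp only [mem_coe, mem_filter] at hf hg
      funext b
      by_cases hb : b ∈ S
      · rw [hf.2 b hb, hg.2 b hb]
      · exact congrFun hfg ⟨b, by simpa using hb⟩)
  refine h.trans ?_
  rw [Finset.card_univ, Fintype.card_fun, Fintype.card_coe, Finset.card_compl,
    Fintype.card_fin, hS]

lemma count_load (n k : ℕ) (i : Fin n) :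
    ((univ : Finset (Fin n → Fin n)).filter
      (fun f => k ≤ (univ.filter (fun b => f b = i)).card)).card
      ≤ n.choose k * n ^ (n - k) := by
  classical
  have hsub : (univ : Finset (Fin n → Fin n)).filter
      (fun f => k ≤ (univ.filter (fun b => f b = i)).card)
      ⊆ ((univ : Finset (Fin n)).powersetCard k).biUnion
        (fun S => (univ : Finset (Fin n → Fin n)).filter (fun f => ∀ b ∈ S, f b = i)) := by
    intro f hf
    rw [mem_filter] at hf
    obtain ⟨S, hSsub, hScard⟩ := Finset.exists_subset_card_eq hf.2
    refine mem_biUnion.2 ⟨S, Finset.mem_powersetCard.2 ⟨subset_univ _, hScard⟩, ?_⟩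
    refine mem_filter.2 ⟨mem_univ _, fun b hb => ?_⟩
    have := hSsub hb
    simp only [mem_filter] at this
    exact this.2
  refine (card_le_card hsub).trans (Finset.card_biUnion_le.trans ?_)
  refine (Finset.sum_le_sum
    (fun S hS => count_fixed n k i S (Finset.mem_powersetCard.1 hS).2)).trans ?_
  rw [Finset.sum_const, Finset.card_powersetCard, Finset.card_univ, Fintype.card_fin,
    smul_eq_mul]

lemma count_total (n k : ℕ) :
    ((univ : Finset (Fin n → Fin n)).filter
      (fun f => ∃ i, k ≤ (univ.filter (fun b => f b = i)).card)).card
      ≤ n * (n.choose k * n ^ (n - k)) := by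
  classical
  have hsub : (univ : Finset (Fin n → Fin n)).filter
      (fun f => ∃ i, k ≤ (univ.filter (fun b => f b = i)).card)
      ⊆ (univ : Finset (Fin n)).biUnion (fun i =>
        (univ : Finset (Fin n → Fin n)).filter
          (fun f => k ≤ (univ.filter (fun b => f b = i)).card)) := by
    intro f hf
    rw [mem_filter] at hf
    obtain ⟨i, hi⟩ := hf.2
    exact mem_biUnion.2 ⟨i, mem_univ _, mem_filter.2 ⟨mem_univ _, hi⟩⟩
  refine (card_le_card hsub).trans (Finset.card_biUnion_le.trans ?_)
  refine (Finset.sum_le_sum (fun i _ => count_load n k i)).trans ?_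
  rw [Finset.sum_const, Finset.card_univ, Fintype.card_fin, smul_eq_mul]

lemma ratio_le (n k : ℕ) :
    (((univ : Finset (Fin n → Fin n)).filter
      (fun f => ∃ i, k ≤ (univ.filter (fun b => f b = i)).card)).card : ℝ) / (n : ℝ) ^ n
      ≤ (n : ℝ) / (Nat.factorial k : ℝ) := by
  classical
  by_cases hn : n = 0
  · subst hn
    have : ((univ : Finset (Fin 0 → Fin 0)).filter
        (fun f => ∃ i, k ≤ (univ.filter (fun b => f b = i)).card)).card = 0 := by
      rw [Finset.card_eq_zero, Finset.filter_eq_empty_iff]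
      rintro f - ⟨i, -⟩
      exact i.elim0
    rw [this]
    simp
  by_cases hk : k ≤ n
  · have hcount := count_total n k
    have hfac : n.choose k * Nat.factorial k * n ^ (n - k) ≤ n ^ n := by
      calc n.choose k * Nat.factorial k * n ^ (n - k)
          = Nat.factorial k * n.choose k * n ^ (n - k) := by ring
        _ = n.descFactorial k * n ^ (n - k) := by
            rw [Nat.descFactorial_eq_factorial_mul_choose]
        _ ≤ n ^ k * n ^ (n - k) := Nat.mul_le_mul_right _ (Nat.descFactorial_le_pow n k)
        _ = n ^ n := by rw [← pow_add, Nat.add_sub_cancel' hk]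
    have hnn : (0 : ℝ) < (n : ℝ) ^ n := by positivity
    have hfpos : (0 : ℝ) < (Nat.factorial k : ℝ) := by
      exact_mod_cast k.factorial_pos
    rw [div_le_div_iff₀ hnn hfpos]
    have h1 : (((univ : Finset (Fin n → Fin n)).filter
        (fun f => ∃ i, k ≤ (univ.filter (fun b => f b = i)).card)).card : ℝ)
        * (Nat.factorial k : ℝ) ≤ (n : ℝ) * ((n.choose k : ℝ) * (n : ℝ) ^ (n - k))
        * (Nat.factorial k : ℝ) := by
      have := hcount
      gcongr
      exact_mod_cast this
    refine h1.trans ?_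
    have : (n : ℝ) * ((n.choose k : ℝ) * (n : ℝ) ^ (n - k)) * (Nat.factorial k : ℝ)
        = (n : ℝ) * ((n.choose k * Nat.factorial k * n ^ (n - k) : ℕ) : ℝ) := by
      push_cast; ring
    rw [this]
    gcongr
    exact_mod_cast hfac
  · push_neg at hk
    have hzero : ((univ : Finset (Fin n → Fin n)).filter
        (fun f => ∃ i, k ≤ (univ.filter (fun b => f b = i)).card)).card = 0 := by
      rw [Finset.card_eq_zero, Finset.filter_eq_empty_iff]
      rintro f - ⟨i, hi⟩
      have : (univ.filter (fun b => f b = i)).card ≤ n := by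
        simpa using Finset.card_filter_le (univ : Finset (Fin n)) (fun b => f b = i)
      omega
    rw [hzero]
    simp only [Nat.cast_zero, zero_div]
    positivity





lemma pow_le_factorial_mul_exp (K : ℕ) :
    ((K : ℝ)) ^ K ≤ (Nat.factorial K : ℝ) * Real.exp K := by
  have hf : (0 : ℝ) < (Nat.factorial K : ℝ) := by exact_mod_cast K.factorial_pos
  rw [← div_le_iff₀' hf]
  refine le_trans ?_ (Real.sum_le_exp_of_nonneg (by positivity) (K + 1))
  have := Finset.single_le_sum (f := fun i => (K : ℝ) ^ i / (Nat.factorial i : ℝ))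
    (fun i _ => by positivity) (Finset.self_mem_range_succ K)
  simpa using this

lemma eventually_div_factorial_le (ε : ℝ) (hε : 0 < ε) :
    ∀ᶠ n : ℕ in atTop,
      (n : ℝ) / (Nat.factorial ⌈(1 + ε) * Real.log n / Real.log (Real.log n)⌉₊ : ℝ)
        ≤ (n : ℝ) ^ (-(ε / 2)) := by
  have hc0 : (0 : ℝ) < ε / 2 / (1 + ε) := by positivity
  set c0 : ℝ := ε / 2 / (1 + ε) with hc0def
  have hg : Tendsto (fun y : ℝ => c0 * y - Real.log y) atTop atTop := by
    have h1 : ∀ᶠ y : ℝ in atTop, Real.log y ≤ c0 / 2 * y := by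
      filter_upwards [Real.isLittleO_log_id_atTop.def (by positivity : (0:ℝ) < c0 / 2),
        eventually_ge_atTop (0 : ℝ)] with y hy hy0
      calc Real.log y ≤ ‖Real.log y‖ := le_abs_self _
        _ ≤ c0 / 2 * ‖id y‖ := hy
        _ = c0 / 2 * y := by simp [Real.norm_eq_abs, abs_of_nonneg hy0]
    refine tendsto_atTop_mono' _ ?_ (tendsto_id.const_mul_atTop (by positivity : (0:ℝ) < c0 / 2))
    filter_upwards [h1] with y hy
    simp only [id]
    linarith
  have hL : Tendsto (fun n : ℕ => Real.log n) atTop atTop :=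
    Real.tendsto_log_atTop.comp tendsto_natCast_atTop_atTop
  have hLL : Tendsto (fun n : ℕ => Real.log (Real.log n)) atTop atTop :=
    Real.tendsto_log_atTop.comp hL
  have hMcond : ∀ᶠ n : ℕ in atTop,
      1 - Real.log (1 + ε) ≤ c0 * Real.log (Real.log n)
        - Real.log (Real.log (Real.log n)) :=
    (hg.comp hLL).eventually_ge_atTop _
  filter_upwards [hMcond, hLL.eventually_ge_atTop 1, hL.eventually_ge_atTop 1,
    eventually_ge_atTop 1] with n hcond hM1 hL1 hn1
  have hn0 : (0 : ℝ) < (n : ℝ) := by exact_mod_cast hn1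
  set L : ℝ := Real.log n with hLdef
  set M : ℝ := Real.log L with hMdef
  set x : ℝ := (1 + ε) * L / M with hxdef
  set K : ℕ := ⌈x⌉₊ with hKdef
  set k : ℝ := (K : ℝ) with hkdef
  have hLpos : (0 : ℝ) < L := lt_of_lt_of_le one_pos hL1
  have hMpos : (0 : ℝ) < M := lt_of_lt_of_le one_pos hM1
  have hxpos : (0 : ℝ) < x := by positivity
  have hxk : x ≤ k := Nat.le_ceil x
  have hkpos : (0 : ℝ) < k := lt_of_lt_of_le hxpos hxk
  have hlogx : Real.log x = Real.log (1 + ε) + M - Real.log M := by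
    rw [hxdef, Real.log_div (by positivity) (by positivity),
      Real.log_mul (by positivity) (by positivity)]
  have hlogk : Real.log x ≤ Real.log k := Real.log_le_log hxpos hxk
  have hkey : (1 + ε / 2) / (1 + ε) * M ≤ Real.log k - 1 := by
    have hc0' : 1 - c0 = (1 + ε / 2) / (1 + ε) := by
      rw [hc0def]
      field_simp
      ring
    have h10 : (1 - c0) * M = (1 + ε / 2) / (1 + ε) * M := by rw [hc0']
    nlinarith [hcond, hlogk, hlogx]
  have hfac : x * ((1 + ε / 2) / (1 + ε) * M) = (1 + ε / 2) * L := by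
    rw [hxdef]
    field_simp
  have hKlog : (1 + ε / 2) * L ≤ k * (Real.log k - 1) := by
    calc (1 + ε / 2) * L = x * ((1 + ε / 2) / (1 + ε) * M) := hfac.symm
      _ ≤ k * (Real.log k - 1) := by
          apply mul_le_mul hxk hkey (by positivity) (le_of_lt hkpos)
  have hA : (n : ℝ) / (Nat.factorial K : ℝ) ≤ (n : ℝ) * Real.exp k / k ^ K := by
    have hfpos : (0 : ℝ) < (Nat.factorial K : ℝ) := by exact_mod_cast K.factorial_pos
    rw [div_le_div_iff₀ hfpos (by positivity)]
    calc (n : ℝ) * k ^ K ≤ (n : ℝ) * ((Nat.factorial K : ℝ) * Real.exp k) := by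
          have := pow_le_factorial_mul_exp K
          gcongr
      _ = (n : ℝ) * Real.exp k * (Nat.factorial K : ℝ) := by ring
  have hB : (n : ℝ) * Real.exp k / k ^ K = Real.exp (L + k - k * Real.log k) := by
    have hk' : (k : ℝ) ^ K = Real.exp (k * Real.log k) := by
      rw [mul_comm, Real.exp_mul, Real.exp_log hkpos, Real.rpow_natCast]
    rw [hk', ← Real.exp_log hn0, ← Real.exp_add, ← Real.exp_sub]
  have hC : L + k - k * Real.log k ≤ -(ε / 2) * L := by nlinarith
  calc (n : ℝ) / (Nat.factorial K : ℝ) ≤ Real.exp (L + k - k * Real.log k) := hB ▸ hA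
    _ ≤ Real.exp (-(ε / 2) * L) := Real.exp_le_exp.2 hC
    _ = (n : ℝ) ^ (-(ε / 2)) := by
        rw [Real.rpow_def_of_pos hn0, mul_comm]

end MaxLoadAux

open MaxLoadAux Finset Filter Real in
/-- If `n` balls are thrown u.a.r. into `n` bins and `K_n` is the maximum load
(probabilities expressed by counting allocation functions `f : Fin n → Fin n`), then for
every `ε > 0`, `P(K_n ≥ (1+ε)·log n / log log n) → 0` as `n → ∞`. -/
theorem max_load_upper_tail_tendsto_zero (ε : ℝ) (hε : 0 < ε) :
    Filter.Tendsto (fun n : ℕ =>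
        (Nat.card {f : Fin n → Fin n //
            ∃ i, (1 + ε) * Real.log n / Real.log (Real.log n)
              ≤ ((Finset.univ.filter (fun b => f b = i)).card : ℝ)} : ℝ) / (n : ℝ) ^ n)
      Filter.atTop (nhds 0) := by
  classical
  have hEq : ∀ n : ℕ, (Nat.card {f : Fin n → Fin n //
      ∃ i, (1 + ε) * Real.log n / Real.log (Real.log n)
        ≤ ((Finset.univ.filter (fun b => f b = i)).card : ℝ)})
      = ((Finset.univ : Finset (Fin n → Fin n)).filter
          (fun f => ∃ i, ⌈(1 + ε) * Real.log n / Real.log (Real.log n)⌉₊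
            ≤ (Finset.univ.filter (fun b => f b = i)).card)).card := by
    intro n
    rw [Nat.card_eq_fintype_card, Fintype.card_subtype]
    congr 1
    apply Finset.filter_congr
    intro f _
    simp only [Nat.ceil_le]
  refine squeeze_zero' ?_ ?_
    ((tendsto_rpow_neg_atTop (by positivity : (0:ℝ) < ε / 2)).comp
      tendsto_natCast_atTop_atTop)
  · filter_upwards with n
    have h1 : (0:ℝ) ≤ (Nat.card {f : Fin n → Fin n //
        ∃ i, (1 + ε) * Real.log n / Real.log (Real.log n)
          ≤ ((Finset.univ.filter (fun b => f b = i)).card : ℝ)} : ℝ) := by positivity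
    have h2 : (0:ℝ) ≤ (n : ℝ) ^ n := by positivity
    exact div_nonneg h1 h2
  · filter_upwards [eventually_div_factorial_le ε hε] with n hb
    rw [hEq n]
    exact (ratio_le n _).trans hb
end
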